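/- Let μ > 0, L > 0, α > 0, and ρ ∈ (0, 1). With h̃ = sqrt( ((1 + ρ)/(ρμ))² + 1/(4μαL) ) − (1 + ρ)/(ρμ) and M(h) = (1/(hμ) + 4hLα)/(ρ − 4hLα(1 + ρ)), the minimal inner-loop length equals M(h̃) = 8αL(1 + ρ + sqrt( μρ²/(4αL) + (1 + ρ)² ))/(μρ²). -/

import Mathlib

/-!
The optimal stepsize `h̃ = √(a² + c) − a`, with `a = (1+ρ)/(ρμ)` and `c = 1/(4μαL)`, is the
positive root of `h² + 2ah = c`. Multiplied by `4μαLρ` this is the first-order condition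
`4μαLρ h² + 8αL(1+ρ) h = ρ` of `M`, and under it `M(h)` collapses to `2/(μρh)`. Rationalising,
`1/h̃ = (√(a² + c) + a)/c`, and `√(μρ²/(4αL) + (1+ρ)²) = ρμ √(a² + c)` gives the closed form.
-/

/-- The inner-loop length `M(h)` of mS2GD at stepsize `h`. -/
noncomputable def innerLoopLength (μ L α ρ h : ℝ) : ℝ :=
  (1 / (h * μ) + 4 * h * L * α) / (ρ - 4 * h * L * α * (1 + ρ))

theorem innerLoopLength_eq_of_quadratic {μ L α ρ h : ℝ} (hμ : 0 < μ) (hL : 0 < L) (hα : 0 < α)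
    (hρ : ρ ≠ 0) (hh : h ≠ 0)
    (hq : 4 * μ * α * L * ρ * h ^ 2 + 8 * α * L * (1 + ρ) * h = ρ) :
    innerLoopLength μ L α ρ h = 2 / (μ * ρ * h) := by
  have hden : ρ - 4 * h * L * α * (1 + ρ) = ρ * (1 + 4 * μ * α * L * h ^ 2) / 2 := by
    linear_combination -hq / 2
  have hpos : 0 < 1 + 4 * μ * α * L * h ^ 2 := by positivity
  rw [innerLoopLength, hden]
  field_simp

theorem sqrt_sq_add_sub_mul_sqrt_sq_add_add {a c : ℝ} (hc : 0 ≤ a ^ 2 + c) :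
    (√(a ^ 2 + c) - a) * (√(a ^ 2 + c) + a) = c := by
  linear_combination Real.sq_sqrt hc

theorem mS2GD_optimal_inner_loop_value_general (μ L α ρ : ℝ)
    (hμ : 0 < μ) (hL : 0 < L) (hα : 0 < α) (hρ0 : 0 < ρ) :
    let ht : ℝ := Real.sqrt (((1 + ρ) / (ρ * μ)) ^ 2 + 1 / (4 * μ * α * L)) - (1 + ρ) / (ρ * μ)
    (1 / (ht * μ) + 4 * ht * L * α) / (ρ - 4 * ht * L * α * (1 + ρ))
      = 8 * α * L * (1 + ρ + Real.sqrt (μ * ρ ^ 2 / (4 * α * L) + (1 + ρ) ^ 2)) /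
          (μ * ρ ^ 2) := by
  intro ht
  set a := (1 + ρ) / (ρ * μ) with ha
  set c := 1 / (4 * μ * α * L) with hc
  set s := √(a ^ 2 + c) with hs
  have hc0 : 0 < c := by positivity
  have has : a < s := Real.lt_sqrt_of_sq_lt (by linarith)
  have hroot : ht * (s + a) = c := sqrt_sq_add_sub_mul_sqrt_sq_add_add (by positivity)
  have hsqrt : √(μ * ρ ^ 2 / (4 * α * L) + (1 + ρ) ^ 2) = ρ * μ * s := by
    rw [hs, ← Real.sqrt_sq (by positivity : 0 ≤ ρ * μ), ← Real.sqrt_mul (by positivity)]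
    congr 1
    rw [ha, hc]
    field_simp
    ring
  have hht : ht = s - a := rfl
  have hca : 4 * μ * α * L * c = 1 := by rw [hc]; field_simp
  have hρa : ρ * μ * a = 1 + ρ := by rw [ha]; field_simp
  clear_value ht s c a
  have hht0 : ht ≠ 0 := hht ▸ (sub_pos.2 has).ne'
  have hM : innerLoopLength μ L α ρ ht = 2 / (μ * ρ * ht) := by
    refine innerLoopLength_eq_of_quadratic hμ hL hα hρ0.ne' hht0 ?_
    linear_combination 4 * μ * α * L * ρ * (hroot + ht * hht) - 8 * α * L * ht * hρa + ρ * hca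
  show innerLoopLength μ L α ρ ht = _
  rw [hM, hsqrt, ← hρa]
  field_simp
  linear_combination -8 * μ * α * L * hroot - 2 * hca

/-- The minimal inner-loop length of mS2GD at the optimal stepsize
`h̃ = sqrt(((1+ρ)/(ρμ))² + 1/(4μαL)) − (1+ρ)/(ρμ)` equals
`M(h̃) = 8αL(1 + ρ + sqrt(μρ²/(4αL) + (1+ρ)²))/(μρ²)`, where
`M(h) = (1/(hμ) + 4hLα)/(ρ − 4hLα(1+ρ))`. -/
theorem mS2GD_optimal_inner_loop_value (μ L α ρ : ℝ)
    (hμ : 0 < μ) (hL : 0 < L) (hα : 0 < α) (hρ0 : 0 < ρ) (hρ1 : ρ < 1) :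
    let ht : ℝ := Real.sqrt (((1 + ρ) / (ρ * μ)) ^ 2 + 1 / (4 * μ * α * L)) - (1 + ρ) / (ρ * μ)
    (1 / (ht * μ) + 4 * ht * L * α) / (ρ - 4 * ht * L * α * (1 + ρ))
      = 8 * α * L * (1 + ρ + Real.sqrt (μ * ρ ^ 2 / (4 * α * L) + (1 + ρ) ^ 2)) /
          (μ * ρ ^ 2) :=
  mS2GD_optimal_inner_loop_value_general μ L α ρ hμ hL hα hρ0
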